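/- (Inclusion principle / Cauchy interlacing for compressions) Let A be an n×n Hermitian matrix with eigenvalues α₁ ≥ … ≥ αₙ, L ⊆ ℂⁿ a subspace of dimension r, and A_L : L → L the compression of A to L (inclusion followed by A followed by orthogonal projection onto L), with eigenvalues α₁^L ≥ … ≥ α_r^L. Then α_{n−r+k} ≤ α_k^L ≤ α_k for 1 ≤ k ≤ r. -/

import Mathlib

open Matrix BigOperators

/-- `α` is the list of eigenvalues of the Hermitian matrix `A`
in weakly decreasing order (with multiplicity). -/
def IsEigSeq {n : ℕ} (A : Matrix (Fin n) (Fin n) ℂ) (hA : A.IsHermitian)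
    (α : Fin n → ℝ) : Prop :=
  Antitone α ∧ ∃ σ : Equiv.Perm (Fin n), ∀ i, α i = hA.eigenvalues (σ i)

/-!
The compression `S = V* T V` of a self-adjoint `T` along an isometry `V` has the same Rayleigh
quotient at `y` as `T` at `V y`. If `s` orthonormal eigenvectors of `T` and `t` of `S` satisfy
`s + t > dim E`, the span of the first family meets the image under `V` of the span of the second
in a nonzero vector, where the Rayleigh quotient is squeezed between the eigenvalue bounds of both
families. For the lower bound take the `n - r + k + 1` largest eigenvalues of `A` and the `r - k`
smallest of `B`; for the upper bound the `n - k` smallest of `A` and the `k + 1` largest of `B`.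
-/

open Module Submodule
open scoped InnerProductSpace

theorem Submodule.exists_ne_zero_mem_of_finrank_lt_add {K V : Type*} [DivisionRing K]
    [AddCommGroup V] [Module K V] [FiniteDimensional K V] {P Q : Submodule K V}
    (h : finrank K V < finrank K P + finrank K Q) : ∃ x ∈ P, x ∈ Q ∧ x ≠ 0 := by
  by_contra! hPQ
  exact h.not_ge (finrank_add_finrank_le_of_disjoint (disjoint_def.2 hPQ))

variable {𝕜 E F ι κ : Type*} [RCLike 𝕜] [NormedAddCommGroup E] [InnerProductSpace 𝕜 E]
  [NormedAddCommGroup F] [InnerProductSpace 𝕜 F]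

theorem Orthonormal.finrank_span_image {v : ι → E} (hv : Orthonormal 𝕜 v) (s : Finset ι) :
    finrank 𝕜 (span 𝕜 (v '' s)) = s.card := by
  rw [Set.image_eq_range]
  exact (finrank_span_eq_card (hv.linearIndependent.comp _ Subtype.val_injective)).trans
    (Fintype.card_coe s)

theorem Orthonormal.inner_eq_zero_of_mem_span_image {v : ι → E} (hv : Orthonormal 𝕜 v)
    {s : Set ι} {i : ι} (hi : i ∉ s) {x : E} (hx : x ∈ span 𝕜 (v '' s)) : ⟪v i, x⟫_𝕜 = 0 := by
  suffices span 𝕜 (v '' s) ≤ (𝕜 ∙ v i)ᗮ from mem_orthogonal_singleton_iff_inner_right.1 (this hx)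
  rw [span_le]
  rintro _ ⟨j, hj, rfl⟩
  exact mem_orthogonal_singleton_iff_inner_right.2 (hv.inner_eq_zero fun hij => hi (hij ▸ hj))

theorem Orthonormal.exists_ne_zero_mem_span_image_map_mem_span_image [FiniteDimensional 𝕜 E]
    {v : ι → E} (hv : Orthonormal 𝕜 v) {w : κ → F} (hw : Orthonormal 𝕜 w) (V : F →ₗᵢ[𝕜] E)
    {s : Finset ι} {t : Finset κ} (hst : finrank 𝕜 E < s.card + t.card) :
    ∃ y ∈ span 𝕜 (w '' t), y ≠ 0 ∧ V y ∈ span 𝕜 (v '' s) := by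
  rw [← hv.finrank_span_image, ← (hw.comp_linearIsometry V).finrank_span_image] at hst
  obtain ⟨x, hxs, hxt, hx0⟩ := exists_ne_zero_mem_of_finrank_lt_add hst
  rw [Set.image_comp, ← V.coe_toLinearMap, span_image] at hxt
  obtain ⟨y, hyt, rfl⟩ := hxt
  exact ⟨y, hyt, fun hy => hx0 (by simp [hy]), hxs⟩

namespace LinearMap.IsSymmetric

variable [Fintype ι] [Fintype κ] {T : E →ₗ[𝕜] E} {S : F →ₗ[𝕜] F} {μ : ι → ℝ} {ν : κ → ℝ}

theorem re_inner_self_apply_eq_sum (hT : T.IsSymmetric) (b : OrthonormalBasis ι 𝕜 E)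
    (hb : ∀ i, T (b i) = (μ i : 𝕜) • b i) (x : E) :
    RCLike.re ⟪x, T x⟫_𝕜 = ∑ i, μ i * ‖⟪b i, x⟫_𝕜‖ ^ 2 := by
  have h : ∀ i, ⟪x, b i⟫_𝕜 * ⟪b i, T x⟫_𝕜 = ((μ i * ‖⟪b i, x⟫_𝕜‖ ^ 2 : ℝ) : 𝕜) := fun i => by
    rw [← hT, hb, inner_smul_left, RCLike.conj_ofReal, ← inner_conj_symm, mul_left_comm,
      RCLike.conj_mul]
    push_cast; rfl
  rw [← b.sum_inner_mul_inner, Finset.sum_congr rfl fun i _ => h i, ← RCLike.ofReal_sum,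
    RCLike.ofReal_re]

theorem re_inner_self_apply_le_of_mem_span (hT : T.IsSymmetric) (b : OrthonormalBasis ι 𝕜 E)
    (hb : ∀ i, T (b i) = (μ i : 𝕜) • b i)
    {s : Set ι} {a : ℝ} (hs : ∀ i ∈ s, μ i ≤ a) {x : E} (hx : x ∈ span 𝕜 (b '' s)) :
    RCLike.re ⟪x, T x⟫_𝕜 ≤ a * ‖x‖ ^ 2 := by
  rw [hT.re_inner_self_apply_eq_sum b hb, ← b.sum_sq_norm_inner_right, Finset.mul_sum]
  refine Finset.sum_le_sum fun i _ => ?_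
  by_cases hi : i ∈ s
  · exact mul_le_mul_of_nonneg_right (hs i hi) (by positivity)
  · simp [b.orthonormal.inner_eq_zero_of_mem_span_image hi hx]

theorem le_re_inner_self_apply_of_mem_span (hT : T.IsSymmetric) (b : OrthonormalBasis ι 𝕜 E)
    (hb : ∀ i, T (b i) = (μ i : 𝕜) • b i)
    {s : Set ι} {a : ℝ} (hs : ∀ i ∈ s, a ≤ μ i) {x : E} (hx : x ∈ span 𝕜 (b '' s)) :
    a * ‖x‖ ^ 2 ≤ RCLike.re ⟪x, T x⟫_𝕜 := by
  rw [hT.re_inner_self_apply_eq_sum b hb, ← b.sum_sq_norm_inner_right, Finset.mul_sum]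
  refine Finset.sum_le_sum fun i _ => ?_
  by_cases hi : i ∈ s
  · exact mul_le_mul_of_nonneg_right (hs i hi) (by positivity)
  · simp [b.orthonormal.inner_eq_zero_of_mem_span_image hi hx]

variable [FiniteDimensional 𝕜 E] {s : Finset ι} {t : Finset κ} {a a' : ℝ}

theorem le_of_le_compression (hT : T.IsSymmetric) (hS : S.IsSymmetric)
    (b : OrthonormalBasis ι 𝕜 E) (hb : ∀ i, T (b i) = (μ i : 𝕜) • b i)
    (c : OrthonormalBasis κ 𝕜 F) (hc : ∀ j, S (c j) = (ν j : 𝕜) • c j)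
    (V : F →ₗᵢ[𝕜] E) (hV : ∀ y, ⟪y, S y⟫_𝕜 = ⟪V y, T (V y)⟫_𝕜)
    (hst : finrank 𝕜 E < s.card + t.card) (ht : ∀ j ∈ t, a' ≤ ν j) (hs : ∀ i ∈ s, μ i ≤ a) :
    a' ≤ a := by
  obtain ⟨y, hyt, hy0, hys⟩ :=
    b.orthonormal.exists_ne_zero_mem_span_image_map_mem_span_image c.orthonormal V hst
  refine le_of_mul_le_mul_right ?_ (by positivity : 0 < ‖y‖ ^ 2)
  calc a' * ‖y‖ ^ 2 ≤ RCLike.re ⟪y, S y⟫_𝕜 := hS.le_re_inner_self_apply_of_mem_span c hc ht hyt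
    _ = RCLike.re ⟪V y, T (V y)⟫_𝕜 := by rw [hV]
    _ ≤ a * ‖V y‖ ^ 2 := hT.re_inner_self_apply_le_of_mem_span b hb hs hys
    _ = a * ‖y‖ ^ 2 := by rw [V.norm_map]

theorem le_of_compression_le (hT : T.IsSymmetric) (hS : S.IsSymmetric)
    (b : OrthonormalBasis ι 𝕜 E) (hb : ∀ i, T (b i) = (μ i : 𝕜) • b i)
    (c : OrthonormalBasis κ 𝕜 F) (hc : ∀ j, S (c j) = (ν j : 𝕜) • c j)
    (V : F →ₗᵢ[𝕜] E) (hV : ∀ y, ⟪y, S y⟫_𝕜 = ⟪V y, T (V y)⟫_𝕜)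
    (hst : finrank 𝕜 E < s.card + t.card) (hs : ∀ i ∈ s, a' ≤ μ i) (ht : ∀ j ∈ t, ν j ≤ a) :
    a' ≤ a := by
  obtain ⟨y, hyt, hy0, hys⟩ :=
    b.orthonormal.exists_ne_zero_mem_span_image_map_mem_span_image c.orthonormal V hst
  refine le_of_mul_le_mul_right ?_ (by positivity : 0 < ‖y‖ ^ 2)
  calc a' * ‖y‖ ^ 2 = a' * ‖V y‖ ^ 2 := by rw [V.norm_map]
    _ ≤ RCLike.re ⟪V y, T (V y)⟫_𝕜 := hT.le_re_inner_self_apply_of_mem_span b hb hs hys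
    _ = RCLike.re ⟪y, S y⟫_𝕜 := by rw [hV]
    _ ≤ a * ‖y‖ ^ 2 := hS.re_inner_self_apply_le_of_mem_span c hc ht hyt

end LinearMap.IsSymmetric

theorem LinearMap.IsSymmetric.interlacing {n r : ℕ} (hr : r ≤ n) {T : E →ₗ[𝕜] E}
    {S : F →ₗ[𝕜] F} (hT : T.IsSymmetric) (hS : S.IsSymmetric)
    (b : OrthonormalBasis (Fin n) 𝕜 E) {μ : Fin n → ℝ} (hμ : Antitone μ)
    (hb : ∀ i, T (b i) = (μ i : 𝕜) • b i)
    (c : OrthonormalBasis (Fin r) 𝕜 F) {ν : Fin r → ℝ} (hν : Antitone ν)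
    (hc : ∀ j, S (c j) = (ν j : 𝕜) • c j)
    (V : F →ₗᵢ[𝕜] E) (hV : ∀ y, ⟪y, S y⟫_𝕜 = ⟪V y, T (V y)⟫_𝕜) (k : Fin r) :
    μ ⟨n - r + k, by omega⟩ ≤ ν k ∧ ν k ≤ μ ⟨k, by omega⟩ := by
  have : FiniteDimensional 𝕜 E := b.toBasis.finiteDimensional_of_finite
  have hn : finrank 𝕜 E = n := by simpa using finrank_eq_card_basis b.toBasis
  constructor
  · refine hT.le_of_compression_le hS b hb c hc V hV (s := Finset.Iic ⟨n - r + k, by omega⟩)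
      (t := Finset.Ici k) ?_ (fun i hi => hμ (Finset.mem_Iic.1 hi))
      (fun j hj => hν (Finset.mem_Ici.1 hj))
    simp only [Fin.card_Iic, Fin.card_Ici, hn]
    omega
  · refine hT.le_of_le_compression hS b hb c hc V hV (s := Finset.Ici ⟨k, by omega⟩)
      (t := Finset.Iic k) ?_ (fun j hj => hν (Finset.mem_Iic.1 hj))
      (fun i hi => hμ (Finset.mem_Ici.1 hi))
    simp only [Fin.card_Iic, Fin.card_Ici, hn]
    omega

theorem IsEigSeq.exists_orthonormalBasis {n : ℕ} {A : Matrix (Fin n) (Fin n) ℂ}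
    {hA : A.IsHermitian} {α : Fin n → ℝ} (hα : IsEigSeq A hA α) :
    ∃ e : OrthonormalBasis (Fin n) ℂ (EuclideanSpace ℂ (Fin n)),
      ∀ i, toEuclideanLin A (e i) = (α i : ℂ) • e i := by
  obtain ⟨-, σ, hσ⟩ := hα
  refine ⟨hA.eigenvectorBasis.reindex σ.symm, fun i => ?_⟩
  ext j
  simp [toLpLin_apply, hA.mulVec_eigenvectorBasis, hσ]

theorem Matrix.inner_toEuclideanLin_toEuclideanLin {m l : Type*} [Fintype m] [DecidableEq m]
    [Fintype l] [DecidableEq l] (U : Matrix m l 𝕜) (M : Matrix m m 𝕜) (y z : EuclideanSpace 𝕜 l) :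
    ⟪toEuclideanLin U y, toEuclideanLin M (toEuclideanLin U z)⟫_𝕜 =
      ⟪y, toEuclideanLin (Uᴴ * M * U) z⟫_𝕜 := by
  rw [← LinearMap.adjoint_inner_right, ← toEuclideanLin_conjTranspose_eq_adjoint]
  simp only [toLpLin_apply, mulVec_mulVec, Matrix.mul_assoc]

/-- Inclusion principle (Cauchy interlacing for compressions): if `A` is
Hermitian with decreasing eigenvalues `α`, `u₁,…,u_r` is an orthonormal basis
of an `r`-dimensional subspace `L`, and `B` is the matrix of the compression
`A_L` (i.e. `B p q = ⟨A u_q, u_p⟩`) with decreasing eigenvalues `β`, then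
`α_{n-r+k} ≤ β_k ≤ α_k` for `1 ≤ k ≤ r` (0-based indices here). -/
theorem inclusion_principle {n r : ℕ} (hr : r ≤ n)
    (A : Matrix (Fin n) (Fin n) ℂ) (hA : A.IsHermitian)
    (α : Fin n → ℝ) (hα : IsEigSeq A hA α)
    (u : Fin r → (Fin n → ℂ))
    (hu : ∀ p q, star (u p) ⬝ᵥ u q = if p = q then 1 else 0)
    (B : Matrix (Fin r) (Fin r) ℂ)
    (hBdef : ∀ p q, B p q = star (u p) ⬝ᵥ A.mulVec (u q))
    (hB : B.IsHermitian)
    (β : Fin r → ℝ) (hβ : IsEigSeq B hB β) :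
    ∀ k : Fin r,
      α ⟨n - r + k.val, by have := k.isLt; omega⟩ ≤ β k ∧
      β k ≤ α ⟨k.val, lt_of_lt_of_le k.isLt hr⟩ := by
  obtain ⟨e, he⟩ := hα.exists_orthonormalBasis
  obtain ⟨f, hf⟩ := hβ.exists_orthonormalBasis
  set U : Matrix (Fin n) (Fin r) ℂ := (of u)ᵀ
  have hUU : Uᴴ * U = 1 := by
    ext p q
    rw [one_apply, ← hu]
    rfl
  have hUAU : Uᴴ * A * U = B := by
    ext p q
    rw [hBdef, Matrix.mul_assoc]
    rfl
  let V := (toEuclideanLin U).isometryOfInner fun y z => by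
    simpa [hUU] using inner_toEuclideanLin_toEuclideanLin U 1 y z
  exact LinearMap.IsSymmetric.interlacing hr (isSymmetric_toEuclideanLin_iff.2 hA)
    (isSymmetric_toEuclideanLin_iff.2 hB) e hα.1 he f hβ.1 hf V
    fun y => by rw [← hUAU, ← inner_toEuclideanLin_toEuclideanLin]; rfl
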